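/- arXiv:1509.06878 — 8 statements merged into one kernel-verified Lean document; each statement's English description precedes it below -/
import Mathlib

section
/- Let R be a unital (not necessarily commutative) ring, N ≥ M positive integers, A an invertible N×N matrix over R, I an N×M matrix, J an M×N matrix, and S₀ an M×M matrix over R. Set S = I·S₀·J. Assume that J·A⁻¹·I is invertible in the M×M matrices over R and that A + S is invertible in the N×N matrices over R. Then J·(A+S)⁻¹·I is invertible, and its inverse equals (J·A⁻¹·I)⁻¹ + S₀. In other words, the generalized quasideterminant satisfies |A+S|_{I,J} = |A|_{I,J} + S₀. -/
private lemma aux_main {R : Type*} [Ring R] {n m : Type*} [Fintype n] [Fintype m]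
    [DecidableEq n] [DecidableEq m]
    (A B Ai Bi : Matrix n n R) (I : Matrix n m R) (J : Matrix m n R)
    (S₀ Pi : Matrix m m R)
    (hA1 : A * Ai = 1) (hA2 : Ai * A = 1) (hB1 : B * Bi = 1) (hB2 : Bi * B = 1)
    (hP1 : (J * Ai * I) * Pi = 1) (hP2 : Pi * (J * Ai * I) = 1)
    (hB : B = A + I * S₀ * J) :
    (J * Bi * I) * (Pi + S₀) = 1 ∧ (Pi + S₀) * (J * Bi * I) = 1 := by
  have hBA : B - A = I * S₀ * J := by rw [hB]; abel
  have key1 : Ai - Bi = Bi * (I * S₀ * J) * Ai := by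
    calc Ai - Bi = Bi * (B - A) * Ai := by
          rw [Matrix.mul_sub, Matrix.sub_mul, hB2, Matrix.one_mul,
            Matrix.mul_assoc Bi A Ai, hA1, Matrix.mul_one]
      _ = Bi * (I * S₀ * J) * Ai := by rw [hBA]
  have key2 : Ai - Bi = Ai * (I * S₀ * J) * Bi := by
    calc Ai - Bi = Ai * (B - A) * Bi := by
          rw [Matrix.mul_sub, Matrix.sub_mul, hA2, Matrix.one_mul,
            Matrix.mul_assoc Ai B Bi, hB1, Matrix.mul_one]
      _ = Ai * (I * S₀ * J) * Bi := by rw [hBA]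
  have e1 : (J * Ai * I) - (J * Bi * I) = (J * Bi * I) * S₀ * (J * Ai * I) := by
    calc (J * Ai * I) - (J * Bi * I) = J * (Ai - Bi) * I := by
          rw [Matrix.mul_sub, Matrix.sub_mul]
      _ = J * (Bi * (I * S₀ * J) * Ai) * I := by rw [key1]
      _ = (J * Bi * I) * S₀ * (J * Ai * I) := by simp only [Matrix.mul_assoc]
  have e2 : (J * Ai * I) - (J * Bi * I) = (J * Ai * I) * S₀ * (J * Bi * I) := by
    calc (J * Ai * I) - (J * Bi * I) = J * (Ai - Bi) * I := by
          rw [Matrix.mul_sub, Matrix.sub_mul]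
      _ = J * (Ai * (I * S₀ * J) * Bi) * I := by rw [key2]
      _ = (J * Ai * I) * S₀ * (J * Bi * I) := by simp only [Matrix.mul_assoc]
  have hX1 : (J * Bi * I) = (J * Ai * I) - (J * Bi * I) * S₀ * (J * Ai * I) := by
    rw [← e1]; abel
  have hX2 : (J * Bi * I) = (J * Ai * I) - (J * Ai * I) * S₀ * (J * Bi * I) := by
    rw [← e2]; abel
  constructor
  · have key : (J * Bi * I) * Pi = 1 - (J * Bi * I) * S₀ := by
      conv_lhs => rw [hX1]
      rw [Matrix.sub_mul, Matrix.mul_assoc ((J * Bi * I) * S₀), hP1, Matrix.mul_one]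
    rw [Matrix.mul_add, key, sub_add_cancel]
  · have key : Pi * (J * Bi * I) = 1 - S₀ * (J * Bi * I) := by
      conv_lhs => rw [hX2]
      rw [Matrix.mul_sub, hP2]
      congr 1
      calc Pi * (J * Ai * I * S₀ * (J * Bi * I))
          = (Pi * (J * Ai * I)) * (S₀ * (J * Bi * I)) := by
            simp only [Matrix.mul_assoc]
        _ = S₀ * (J * Bi * I) := by rw [hP2, Matrix.one_mul]
    rw [Matrix.add_mul, key, sub_add_cancel]

/-- **Generalized quasideterminant of `A + S`** (De Sole–Kac–Valeri).
Let `R` be a unital (not necessarily commutative) ring, `N ≥ M > 0`, `A` an invertible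
`N×N` matrix, `I : N×M`, `J : M×N`, `S₀ : M×M`, and `S = I·S₀·J`.  If `J·A⁻¹·I` and `A+S`
are invertible, then `J·(A+S)⁻¹·I` is invertible with inverse `(J·A⁻¹·I)⁻¹ + S₀`,
i.e. `|A+S|_{I,J} = |A|_{I,J} + S₀`. -/
theorem statement0 {R : Type*} [Ring R] {N M : ℕ} (hM : 0 < M) (hMN : M ≤ N)
    (A : Matrix (Fin N) (Fin N) R) (I : Matrix (Fin N) (Fin M) R)
    (J : Matrix (Fin M) (Fin N) R) (S₀ : Matrix (Fin M) (Fin M) R)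
    [Invertible A] [Invertible (J * ⅟A * I)] [Invertible (A + I * S₀ * J)] :
    (J * ⅟(A + I * S₀ * J) * I) * (⅟(J * ⅟A * I) + S₀) = 1 ∧
      (⅟(J * ⅟A * I) + S₀) * (J * ⅟(A + I * S₀ * J) * I) = 1 := by
  exact aux_main A (A + I * S₀ * J) (⅟A) (⅟(A + I * S₀ * J)) I J S₀ (⅟(J * ⅟A * I))
    (mul_invOf_self A) (invOf_mul_self A) (mul_invOf_self _) (invOf_mul_self _)
    (mul_invOf_self _) (invOf_mul_self _) rfl
end

section
/- Let A be an invertible N×N matrix over a unital ring R, written in block form A = [[a, b], [c, d]] with a of size M×M, b of size M×(N-M), c of size (N-M)×M, d of size (N-M)×(N-M). Let I_{NM} be the N×M matrix [[1_M],[0]] and J_{MN} the M×N matrix [1_M, 0]. If d is invertible and J_{MN}·A⁻¹·I_{NM} is invertible, then the quasideterminant |A|_{I_{NM},J_{MN}} = (J_{MN}·A⁻¹·I_{NM})⁻¹ equals a − b·d⁻¹·c. -/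
open Matrix

/-- The `N×M` matrix `[[1_M],[0]]` (here `N = M + K`, rows indexed by `Fin M ⊕ Fin K`). -/
def Imat (R : Type*) [Ring R] (M K : ℕ) : Matrix (Fin M ⊕ Fin K) (Fin M) R :=
  Matrix.of fun x j =>
    match x with
    | Sum.inl i => if i = j then 1 else 0
    | Sum.inr _ => 0

/-- The `M×N` matrix `[1_M, 0]`. -/
def Jmat (R : Type*) [Ring R] (M K : ℕ) : Matrix (Fin M) (Fin M ⊕ Fin K) R :=
  Matrix.of fun i x =>
    match x with
    | Sum.inl j => if i = j then 1 else 0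
    | Sum.inr _ => 0

lemma toBlocks11_one {R : Type*} [Ring R] {M K : ℕ} :
    (1 : Matrix (Fin M ⊕ Fin K) (Fin M ⊕ Fin K) R).toBlocks₁₁ = 1 := by
  ext i j
  simp [Matrix.toBlocks₁₁, Matrix.one_apply]

lemma toBlocks12_one {R : Type*} [Ring R] {M K : ℕ} :
    (1 : Matrix (Fin M ⊕ Fin K) (Fin M ⊕ Fin K) R).toBlocks₁₂ = 0 := by
  ext i j
  simp [Matrix.toBlocks₁₂, Matrix.one_apply]

lemma JXI_eq {R : Type*} [Ring R] {M K : ℕ} (X : Matrix (Fin M ⊕ Fin K) (Fin M ⊕ Fin K) R) :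
    Jmat R M K * X * Imat R M K = X.toBlocks₁₁ := by
  ext i j
  simp [Matrix.mul_apply, Jmat, Imat, Matrix.toBlocks₁₁, Fintype.sum_sum_type, ite_mul, mul_ite]

/-- **Block formula for the quasideterminant.**  If `A = [[a,b],[c,d]]` is invertible,
`d` is invertible, and `J_{MN}·A⁻¹·I_{NM}` is invertible, then
`|A|_{I_{NM},J_{MN}} = (J_{MN}·A⁻¹·I_{NM})⁻¹ = a − b·d⁻¹·c`. -/
theorem statement2 {R : Type*} [Ring R] {M K : ℕ}
    (a : Matrix (Fin M) (Fin M) R) (b : Matrix (Fin M) (Fin K) R)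
    (c : Matrix (Fin K) (Fin M) R) (d : Matrix (Fin K) (Fin K) R)
    [Invertible (Matrix.fromBlocks a b c d)] [Invertible d]
    [Invertible (Jmat R M K * ⅟(Matrix.fromBlocks a b c d) * Imat R M K)] :
    ⅟(Jmat R M K * ⅟(Matrix.fromBlocks a b c d) * Imat R M K) = a - b * ⅟d * c := by
  obtain ⟨p, q, r, t, hB⟩ : ∃ p q r t, ⅟(Matrix.fromBlocks a b c d) = Matrix.fromBlocks p q r t :=
    ⟨_, _, _, _, (Matrix.fromBlocks_toBlocks _).symm⟩
  have hBA : ⅟(Matrix.fromBlocks a b c d) * Matrix.fromBlocks a b c d = 1 := invOf_mul_self _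
  rw [hB, Matrix.fromBlocks_multiply] at hBA
  have h1 : p * a + q * c = 1 := by
    have := congrArg Matrix.toBlocks₁₁ hBA
    simpa [toBlocks11_one] using this
  have h2 : p * b + q * d = 0 := by
    have := congrArg Matrix.toBlocks₁₂ hBA
    simpa [toBlocks12_one] using this
  have hqd : q * d = -(p * b) := eq_neg_of_add_eq_zero_right h2
  have hq : q = -(p * b * ⅟d) := by
    calc q = q * d * ⅟d := by rw [Matrix.mul_assoc, mul_invOf_self, Matrix.mul_one]
    _ = -(p * b * ⅟d) := by rw [hqd, Matrix.neg_mul]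
  have key : (Jmat R M K * ⅟(Matrix.fromBlocks a b c d) * Imat R M K)
      * (a - b * ⅟d * c) = 1 := by
    rw [JXI_eq, hB, Matrix.toBlocks_fromBlocks₁₁, Matrix.mul_sub]
    have h3 : p * (b * ⅟d * c) = -(q * c) := by
      rw [hq]; simp [Matrix.neg_mul, Matrix.mul_assoc]
    rw [h3, sub_neg_eq_add, h1]
  exact invOf_eq_right_inv key
end

section
/- Let 𝒱 be a differential integral domain over a field 𝔽 of characteristic 0, and let Q ∈ Mat_{N×Ñ}(𝒱) be a generic matrix (its entries are differentially algebraically independent over 𝔽). Let J ∈ Mat_{M×N}(𝔽) be a constant matrix of rank M (M ≤ N) and I ∈ Mat_{Ñ×M̃}(𝔽) a constant matrix of rank M̃ (M̃ ≤ Ñ). Then the matrix J·Q·I ∈ Mat_{M×M̃}(𝒱) is generic. -/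
/-- A matrix `Q` with entries in a differential algebra `𝒱` over `𝔽` is *generic* if its
entries, together with all their derivatives, are algebraically independent over `𝔽`. -/
def Matrix.DiffGeneric (F : Type*) {V : Type*} [CommRing F] [CommRing V] [Algebra F V]
    (d : V → V) {m n : Type*} (Q : Matrix m n V) : Prop :=
  AlgebraicIndependent F (fun p : (m × n) × ℕ => d^[p.2] (Q p.1.1 p.1.2))


open MvPolynomial Matrix
lemma aux_right_inv {F : Type*} [Field F] {m n : ℕ} (A : Matrix (Fin m) (Fin n) F)
    (h : A.rank = m) : ∃ B : Matrix (Fin n) (Fin m) F, A * B = 1 := by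
  rw [← Matrix.mulVec_surjective_iff_exists_right_inverse]
  have ht : LinearMap.range A.mulVecLin = ⊤ := by
    apply Submodule.eq_top_of_finrank_eq
    rw [← Matrix.rank, h, Module.finrank_pi]
    simp
  intro y
  obtain ⟨x, hx⟩ := LinearMap.range_eq_top.mp ht y
  exact ⟨x, hx⟩

lemma aux_left_inv {F : Type*} [Field F] {m n : ℕ} (A : Matrix (Fin n) (Fin m) F)
    (h : A.rank = m) : ∃ B : Matrix (Fin m) (Fin n) F, B * A = 1 := by
  obtain ⟨B, hB⟩ := aux_right_inv Aᵀ (by rw [Matrix.rank_transpose, h])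
  exact ⟨Bᵀ, by simpa [Matrix.transpose_mul] using congrArg Matrix.transpose hB⟩

lemma aux_entry {F V : Type*} [Field F] [CommRing V] [Algebra F V] (d : Derivation F V V)
    {M N M' N' : ℕ} (Q : Matrix (Fin N) (Fin N') V)
    (J : Matrix (Fin M) (Fin N) F) (I : Matrix (Fin N') (Fin M') F)
    (i : Fin M) (j : Fin M') (k : ℕ) :
    d^[k] ((J.map (algebraMap F V) * Q * I.map (algebraMap F V)) i j)
      = ∑ x : Fin N × Fin N',
          algebraMap F V (J i x.1 * I x.2 j) * d^[k] (Q x.1 x.2) := by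
  induction k with
  | zero =>
    simp only [Function.iterate_zero, id_eq, Matrix.mul_apply, Matrix.map_apply,
      Finset.sum_mul, Fintype.sum_prod_type]
    rw [Finset.sum_comm]
    refine Finset.sum_congr rfl fun b _ => Finset.sum_congr rfl fun a _ => ?_
    rw [_root_.map_mul]; ring
  | succ k ih =>
    rw [Function.iterate_succ_apply', ih, map_sum]
    refine Finset.sum_congr rfl fun x _ => ?_
    rw [Function.iterate_succ_apply']
    simp [Algebra.smul_def]

/-- **Lemma 2.11 (lem:generic3).**  If `Q ∈ Mat_{N×Ñ}(𝒱)` is generic, `J ∈ Mat_{M×N}(𝔽)`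
has rank `M ≤ N` and `I ∈ Mat_{Ñ×M̃}(𝔽)` has rank `M̃ ≤ Ñ`, then `J·Q·I` is generic. -/
theorem statement5 {F V : Type*} [Field F] [CharZero F] [CommRing V] [IsDomain V]
    [Algebra F V] (d : Derivation F V V)
    {M N M' N' : ℕ} (hMN : M ≤ N) (hM'N' : M' ≤ N')
    (Q : Matrix (Fin N) (Fin N') V) (hQ : Matrix.DiffGeneric F (⇑d) Q)
    (J : Matrix (Fin M) (Fin N) F) (hJ : J.rank = M)
    (I : Matrix (Fin N') (Fin M') F) (hI : I.rank = M') :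
    Matrix.DiffGeneric F (⇑d) (J.map (algebraMap F V) * Q * I.map (algebraMap F V)) := by
  obtain ⟨J', hJ'⟩ := aux_right_inv J hJ
  obtain ⟨I', hI'⟩ := aux_left_inv I hI
  unfold Matrix.DiffGeneric AlgebraicIndependent at hQ ⊢
  set v : (Fin N × Fin N') × ℕ → V := fun q => d^[q.2] (Q q.1.1 q.1.2) with hv
  set w : (Fin M × Fin M') × ℕ → V := fun p =>
    d^[p.2] ((J.map (algebraMap F V) * Q * I.map (algebraMap F V)) p.1.1 p.1.2) with hw
  set σT : MvPolynomial ((Fin M × Fin M') × ℕ) F →ₐ[F] MvPolynomial ((Fin N × Fin N') × ℕ) F :=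
    aeval (fun p => ∑ x : Fin N × Fin N',
      C (J p.1.1 x.1 * I x.2 p.1.2) * X (x, p.2)) with hσT
  set σS : MvPolynomial ((Fin N × Fin N') × ℕ) F →ₐ[F] MvPolynomial ((Fin M × Fin M') × ℕ) F :=
    aeval (fun q => ∑ y : Fin M × Fin M',
      C (J' q.1.1 y.1 * I' y.2 q.1.2) * X (y, q.2)) with hσS
  have hcomp : (aeval w : MvPolynomial _ F →ₐ[F] V) = (aeval v).comp σT := by
    apply MvPolynomial.algHom_ext
    intro p
    simp only [aeval_X, AlgHom.comp_apply, hσT, map_sum, _root_.map_mul, aeval_C, hw]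
    rw [aux_entry d Q J I p.1.1 p.1.2 p.2]
    exact Finset.sum_congr rfl fun x _ => by rw [_root_.map_mul]
  have hST : σS.comp σT = AlgHom.id F _ := by
    apply MvPolynomial.algHom_ext
    intro p
    simp only [AlgHom.comp_apply, AlgHom.id_apply, hσT, hσS, aeval_X, map_sum, _root_.map_mul, aeval_C]
    have step1 : ∀ y : Fin M × Fin M',
        (∑ x : Fin N × Fin N', J p.1.1 x.1 * I x.2 p.1.2 * (J' x.1 y.1 * I' y.2 x.2))
        = (J * J') p.1.1 y.1 * (I' * I) y.2 p.1.2 := by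
      intro y
      rw [Matrix.mul_apply, Matrix.mul_apply, Fintype.sum_prod_type, Finset.sum_mul_sum]
      refine Finset.sum_congr rfl fun a _ => Finset.sum_congr rfl fun b _ => by ring
    calc (∑ x : Fin N × Fin N', C (J p.1.1 x.1) * C (I x.2 p.1.2) *
            ∑ y : Fin M × Fin M', C (J' x.1 y.1) * C (I' y.2 x.2) * X (y, p.2))
        = ∑ y : Fin M × Fin M', C (∑ x : Fin N × Fin N',
            J p.1.1 x.1 * I x.2 p.1.2 * (J' x.1 y.1 * I' y.2 x.2)) * X (y, p.2) := by
          simp only [Finset.mul_sum, map_sum, Finset.sum_mul, _root_.map_mul]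
          rw [Finset.sum_comm]
          exact Finset.sum_congr rfl fun y _ => Finset.sum_congr rfl fun x _ => by ring
      _ = X p := by
          simp only [step1, hJ', hI', Matrix.one_apply]
          rw [Fintype.sum_prod_type]
          rw [eq_comm]
          simp [apply_ite C, ite_mul, Finset.sum_ite_eq, Finset.sum_ite_eq']
  have hσTinj : Function.Injective σT := by
    intro a b hab
    have := congrArg σS hab
    have h1 := congrFun (congrArg (fun f => f.toFun) hST)
    simpa using (h1 a).symm.trans ((this).trans (h1 b))
  rw [show w = w from rfl]
  have : Function.Injective ((aeval v).comp σT) := hQ.comp hσTinj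
  rw [hcomp]
  exact this
end

section
/- Let P₁ ∈ Mat_{N×N}(𝔽) and P₂ ∈ Mat_{Ñ×Ñ}(𝔽) be invertible matrices with entries in the field of constants 𝔽 of a differential integral domain 𝒱. Then a matrix Q ∈ Mat_{N×Ñ}(𝒱) is generic if and only if P₁·Q·P₂ is generic. -/
open MvPolynomial in
/-- Algebraic independence is preserved by an invertible linear change of variables
(uniform in the second index). -/
lemma aux_lin_change {F V : Type*} [Field F] [CommRing V] [Algebra F V]
    {μ : Type*} [Fintype μ] [DecidableEq μ]
    (M : Matrix μ μ F) (hM : IsUnit M) (x : μ × ℕ → V)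
    (hx : AlgebraicIndependent F x) :
    AlgebraicIndependent F (fun p : μ × ℕ => ∑ j, M p.1 j • x (j, p.2)) := by
  classical
  have hMM : M * (↑hM.unit⁻¹ : Matrix μ μ F) = 1 := hM.mul_val_inv
  set Minv : Matrix μ μ F := ↑hM.unit⁻¹ with hMinv
  set φ : MvPolynomial (μ × ℕ) F →ₐ[F] MvPolynomial (μ × ℕ) F :=
    aeval (fun p : μ × ℕ => ∑ j, M p.1 j • X (j, p.2)) with hφ
  set ψ : MvPolynomial (μ × ℕ) F →ₐ[F] MvPolynomial (μ × ℕ) F :=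
    aeval (fun p : μ × ℕ => ∑ j, Minv p.1 j • X (j, p.2)) with hψ
  have key : ∀ p : μ × ℕ, ψ (φ (X p)) = X p := by
    intro p
    rw [hφ, hψ]
    simp only [aeval_X, map_sum, map_smul, Finset.smul_sum, smul_smul]
    rw [Finset.sum_comm]
    have h2 : ∀ i : μ, ∑ j, (M p.1 j * Minv j i) • (X (i, p.2) : MvPolynomial (μ × ℕ) F)
        = (1 : Matrix μ μ F) p.1 i • X (i, p.2) := by
      intro i
      rw [← Finset.sum_smul, ← Matrix.mul_apply, hMM]
    simp only [h2, Matrix.one_apply, ite_smul, one_smul, zero_smul]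
    simp
  have hinjφ : Function.Injective φ := by
    have hleft : Function.LeftInverse ψ φ := by
      have h3 : ψ.comp φ = AlgHom.id F _ := algHom_ext fun p => key p
      intro a
      simpa using DFunLike.congr_fun h3 a
    exact hleft.injective
  rw [algebraicIndependent_iff_injective_aeval]
  have h4 : (aeval (fun p : μ × ℕ => ∑ j, M p.1 j • x (j, p.2)) :
      MvPolynomial (μ × ℕ) F →ₐ[F] V) = (aeval x).comp φ := by
    apply algHom_ext
    intro p
    simp [hφ]
  rw [h4]
  exact ((algebraicIndependent_iff_injective_aeval.mp hx).comp hinjφ)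

lemma isUnit_of_mul_eq_one_aux {n R : Type*} [Fintype n] [DecidableEq n] [CommRing R]
    (A B : Matrix n n R) (h : A * B = 1) : IsUnit A :=
  ⟨⟨A, B, h, mul_eq_one_comm.mp h⟩, rfl⟩

set_option maxHeartbeats 1000000 in
open Matrix Kronecker in
/-- One direction of the statement. -/
lemma key_dir {F V : Type*} [Field F] [CommRing V]
    [Algebra F V] (d : Derivation F V V)
    {N N' : ℕ} (P₁ : Matrix (Fin N) (Fin N) F) (P₂ : Matrix (Fin N') (Fin N') F)
    (hP₁ : IsUnit P₁) (hP₂ : IsUnit P₂) (Q : Matrix (Fin N) (Fin N') V)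
    (h : Matrix.DiffGeneric F (⇑d) Q) :
    Matrix.DiffGeneric F (⇑d) (P₁.map (algebraMap F V) * Q * P₂.map (algebraMap F V)) := by
  classical
  set M : Matrix (Fin N × Fin N') (Fin N × Fin N') F := P₁ ⊗ₖ P₂ᵀ with hMdef
  have hM : IsUnit M := by
    have hmul : M * ((↑hP₁.unit⁻¹ : Matrix (Fin N) (Fin N) F) ⊗ₖ
        ((↑hP₂.unit⁻¹ : Matrix (Fin N') (Fin N') F)ᵀ)) = 1 := by
      rw [hMdef, ← Matrix.mul_kronecker_mul, ← Matrix.transpose_mul, hP₁.mul_val_inv,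
        hP₂.val_inv_mul, Matrix.transpose_one, Matrix.one_kronecker_one]
    exact isUnit_of_mul_eq_one_aux M _ hmul
  have entry : ∀ (k : ℕ) (i : Fin N) (j : Fin N'),
      (⇑d)^[k] ((P₁.map (algebraMap F V) * Q * P₂.map (algebraMap F V)) i j)
        = ∑ q : Fin N × Fin N', (P₁ i q.1 * P₂ q.2 j) • (⇑d)^[k] (Q q.1 q.2) := by
    intro k i j
    have h1 : (P₁.map (algebraMap F V) * Q * P₂.map (algebraMap F V)) i j
        = ∑ q : Fin N × Fin N', (P₁ i q.1 * P₂ q.2 j) • Q q.1 q.2 := by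
      simp only [Matrix.mul_apply, Matrix.map_apply, Finset.sum_mul,
        Fintype.sum_prod_type, Algebra.smul_def, _root_.map_mul]
      rw [Finset.sum_comm]
      refine Finset.sum_congr rfl fun b _ => Finset.sum_congr rfl fun a _ => ?_
      ring
    have hiter : ∀ v : V, (⇑d)^[k] v = ((d : V →ₗ[F] V) ^ k) v := fun v =>
      (Module.End.pow_apply _ _ _).symm
    rw [h1, hiter, map_sum]
    refine Finset.sum_congr rfl fun q _ => ?_
    rw [_root_.map_smul, ← hiter]
  have heq : (fun p : (Fin N × Fin N') × ℕ =>
      (⇑d)^[p.2] ((P₁.map (algebraMap F V) * Q * P₂.map (algebraMap F V)) p.1.1 p.1.2))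
      = fun p : (Fin N × Fin N') × ℕ => ∑ q, M p.1 q • (fun r : (Fin N × Fin N') × ℕ =>
          (⇑d)^[r.2] (Q r.1.1 r.1.2)) (q, p.2) := by
    funext p
    rw [entry]
    refine Finset.sum_congr rfl fun q _ => ?_
    rw [hMdef, Matrix.kroneckerMap_apply]
    rfl
  unfold Matrix.DiffGeneric at h ⊢
  rw [heq]
  exact aux_lin_change M hM (fun r : (Fin N × Fin N') × ℕ => (⇑d)^[r.2] (Q r.1.1 r.1.2)) h

/-- **Lemma 2.10 (lem:generic2).**  For invertible constant matrices
`P₁ ∈ Mat_{N×N}(𝔽)`, `P₂ ∈ Mat_{Ñ×Ñ}(𝔽)`, a matrix `Q ∈ Mat_{N×Ñ}(𝒱)` is generic if and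
only if `P₁·Q·P₂` is generic. -/
theorem statement7 {F V : Type*} [Field F] [CharZero F] [CommRing V] [IsDomain V]
    [Algebra F V] (d : Derivation F V V)
    {N N' : ℕ} (P₁ : Matrix (Fin N) (Fin N) F) (P₂ : Matrix (Fin N') (Fin N') F)
    (hP₁ : IsUnit P₁) (hP₂ : IsUnit P₂) (Q : Matrix (Fin N) (Fin N') V) :
    Matrix.DiffGeneric F (⇑d) Q ↔
      Matrix.DiffGeneric F (⇑d) (P₁.map (algebraMap F V) * Q * P₂.map (algebraMap F V)) := by
  constructor
  · exact key_dir d P₁ P₂ hP₁ hP₂ Q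
  · intro h
    have hA : IsUnit (↑hP₁.unit⁻¹ : Matrix (Fin N) (Fin N) F) := hP₁.unit⁻¹.isUnit
    have hB : IsUnit (↑hP₂.unit⁻¹ : Matrix (Fin N') (Fin N') F) := hP₂.unit⁻¹.isUnit
    have h2 := key_dir d _ _ hA hB _ h
    have hrw : (↑hP₁.unit⁻¹ : Matrix (Fin N) (Fin N) F).map (algebraMap F V) *
        (P₁.map (algebraMap F V) * Q * P₂.map (algebraMap F V)) *
        (↑hP₂.unit⁻¹ : Matrix (Fin N') (Fin N') F).map (algebraMap F V) = Q := by
      have e1 : (↑hP₁.unit⁻¹ : Matrix (Fin N) (Fin N) F).map (algebraMap F V) *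
          P₁.map (algebraMap F V) = 1 := by
        rw [← Matrix.map_mul (f := algebraMap F V), hP₁.val_inv_mul]
        simp
      have e2 : P₂.map (algebraMap F V) *
          (↑hP₂.unit⁻¹ : Matrix (Fin N') (Fin N') F).map (algebraMap F V) = 1 := by
        rw [← Matrix.map_mul (f := algebraMap F V), hP₂.mul_val_inv]
        simp
      calc (↑hP₁.unit⁻¹ : Matrix (Fin N) (Fin N) F).map (algebraMap F V) *
            (P₁.map (algebraMap F V) * Q * P₂.map (algebraMap F V)) *
            (↑hP₂.unit⁻¹ : Matrix (Fin N') (Fin N') F).map (algebraMap F V)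
          = ((↑hP₁.unit⁻¹ : Matrix (Fin N) (Fin N) F).map (algebraMap F V) *
              P₁.map (algebraMap F V)) * Q *
            (P₂.map (algebraMap F V) *
              (↑hP₂.unit⁻¹ : Matrix (Fin N') (Fin N') F).map (algebraMap F V)) := by
            simp only [Matrix.mul_assoc]
        _ = Q := by rw [e1, e2, Matrix.one_mul, Matrix.mul_one]
    rwa [hrw] at h2
end

section
/- Let 𝒦 be a differential field and a ∈ 𝒦. The 3×3 matrix differential operator ∂·diag(1,1,0) + M, where M is the matrix with rows (0, a', −a), (0, 0, 1), (1, a, 0), is not invertible in Mat_{3×3}(𝒦((∂⁻¹))) for any a, even though the constant-coefficient matrix M itself is invertible whenever a' ≠ 0. -/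
open scoped BigOperators

/-- Generalized binomial coefficient `binom(m, i)` for `m ∈ ℤ`, `i ∈ ℕ`. -/
def intBin (m : ℤ) (i : ℕ) : ℤ :=
  (∏ j ∈ Finset.range i, (m - (j : ℤ))) / (Nat.factorial i : ℤ)

/-- Coefficient of `∂^k` in the composition `f(∂) ∘ g(∂)` of pseudodifferential
operators encoded by their coefficient functions. -/
noncomputable def pdoMulCoeff {K : Type*} [Field K] (d : K → K) (f g : ℤ → K) (k : ℤ) : K :=
  ∑ᶠ (m : ℤ) (i : ℕ), f m * ((intBin m i : ℤ) : K) * d^[i] (g (k - m + i))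

/-- Product of matrices of pseudodifferential operators. -/
noncomputable def pdoMatMul {K : Type*} [Field K] (d : K → K) {l m n : Type*} [Fintype m]
    (A : Matrix l m (ℤ → K)) (B : Matrix m n (ℤ → K)) : Matrix l n (ℤ → K) :=
  Matrix.of fun i j => ∑ t : m, pdoMulCoeff d (A i t) (B t j)

/-- The identity matrix pseudodifferential operator. -/
def pdoOne {K : Type*} [Field K] {n : Type*} [DecidableEq n] : Matrix n n (ℤ → K) :=
  Matrix.of fun i j k => if i = j ∧ k = 0 then 1 else 0

/-- Coefficients vanish in sufficiently large degree. -/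
def pdoBounded {K : Type*} [Zero K] {l m : Type*} (A : Matrix l m (ℤ → K)) : Prop :=
  ∃ n : ℤ, ∀ i j k, n < k → A i j k = 0

/-- `B` is a two-sided inverse of `A` in `Mat(𝒦((∂⁻¹)))`. -/
noncomputable def pdoInverse {K : Type*} [Field K] (d : K → K) {n : Type*} [Fintype n]
    [DecidableEq n] (A B : Matrix n n (ℤ → K)) : Prop :=
  pdoMatMul d A B = pdoOne ∧ pdoMatMul d B A = pdoOne

/-- The constant matrix `M` of Example 2.15, with rows `(0, a', −a)`, `(0,0,1)`, `(1,a,0)`. -/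
noncomputable def exMat {K : Type*} [Field K] (d : Derivation ℤ K K) (a : K) :
    Matrix (Fin 3) (Fin 3) K :=
  !![0, d a, -a; 0, 0, 1; 1, a, 0]

/-- The `3×3` matrix differential operator `∂·diag(1,1,0) + M` of Example 2.15. -/
noncomputable def exOp {K : Type*} [Field K] (d : Derivation ℤ K K) (a : K) :
    Matrix (Fin 3) (Fin 3) (ℤ → K) :=
  Matrix.of fun i j k =>
    if k = 1 then (Matrix.diagonal ![1, 1, 0] : Matrix (Fin 3) (Fin 3) K) i j
    else if k = 0 then exMat d a i j else 0

/-!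
The zeroth row of `L = ∂·diag(1,1,0) + M` is `∂ ∘ (row 2) − a · (row 1)`, so the row vector
`(1, a, −∂)` annihilates `L` from the left and `L` has no right inverse. Concretely, column `0`
of `L B = 1` in degrees `0` and `−1` forces `1 = 0`. The determinant of `M` is `a'`.
-/

theorem intBin_zero_right (m : ℤ) : intBin m 0 = 1 := by
  simp [intBin]

theorem intBin_one_right (m : ℤ) : intBin m 1 = m := by
  simp [intBin]

theorem intBin_natCast_of_lt {m i : ℕ} (h : m < i) : intBin m i = 0 := by
  rw [intBin, Finset.prod_eq_zero (Finset.mem_range.2 h) (sub_self _), EuclideanDomain.zero_div]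

section FirstOrder

variable {K : Type*} [Field K] (d : K → K)

theorem pdoMulCoeff_of_order_le_one {f : ℤ → K} (hf : ∀ m, m ≠ 0 → m ≠ 1 → f m = 0)
    (g : ℤ → K) (k : ℤ) :
    pdoMulCoeff d f g k = f 0 * g k + f 1 * (g (k - 1) + d (g k)) := by
  have order_zero : ∑ᶠ i : ℕ, f 0 * (intBin 0 i : K) * d^[i] (g (k - 0 + i)) = f 0 * g k := by
    rw [finsum_eq_single _ 0 fun i hi => by
      simp [by simpa using intBin_natCast_of_lt (Nat.pos_of_ne_zero hi)]]
    simp [intBin_zero_right]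
  have order_one : ∑ᶠ i : ℕ, f 1 * (intBin 1 i : K) * d^[i] (g (k - 1 + i)) =
      f 1 * (g (k - 1) + d (g k)) := by
    rw [finsum_eq_sum_of_support_subset (s := Finset.range 2) _ fun i hi => by
      by_contra hi2
      exact hi (by simp [by simpa using intBin_natCast_of_lt (m := 1) (by simpa using hi2)])]
    simp [Finset.sum_range_succ, intBin_zero_right, intBin_one_right, mul_add]
  rw [pdoMulCoeff, finsum_eq_sum_of_support_subset (s := {0, 1}) _ fun m hm => by
    by_contra h01
    simp only [Finset.coe_insert, Finset.coe_singleton, Set.mem_insert_iff,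
      Set.mem_singleton_iff, not_or] at h01
    exact hm (by simp [hf m h01.1 h01.2]),
    Finset.sum_pair zero_ne_one, order_zero, order_one]

theorem pdoMatMul_apply_of_order_le_one {l m n : Type*} [Fintype m]
    {A : Matrix l m (ℤ → K)} (hA : ∀ i t r, r ≠ 0 → r ≠ 1 → A i t r = 0)
    (B : Matrix m n (ℤ → K)) (i : l) (j : n) (k : ℤ) :
    pdoMatMul d A B i j k =
      ∑ t, (A i t 0 * B t j k + A i t 1 * (B t j (k - 1) + d (B t j k))) := by
  simp only [pdoMatMul, Matrix.of_apply, Finset.sum_apply,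
    pdoMulCoeff_of_order_le_one d (hA i _)]

end FirstOrder

theorem exOp_apply_of_ne {K : Type*} [Field K] (d : Derivation ℤ K K) (a : K) (i t : Fin 3)
    {r : ℤ} (h0 : r ≠ 0) (h1 : r ≠ 1) : exOp d a i t r = 0 := by
  simp [exOp, h0, h1]

section ExOpProduct

variable {K : Type*} [Field K] (d : Derivation ℤ K K) (a : K) {n : Type*}
  (B : Matrix (Fin 3) n (ℤ → K)) (j : n) (k : ℤ)

theorem pdoMatMul_exOp_apply_zero :
    pdoMatMul d (exOp d a) B 0 j k =
      B 0 j (k - 1) + d (B 0 j k) + d a * B 1 j k - a * B 2 j k := by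
  rw [pdoMatMul_apply_of_order_le_one d (exOp_apply_of_ne d a)]
  simp [Fin.sum_univ_three, exOp, exMat, sub_eq_add_neg]

theorem pdoMatMul_exOp_apply_one :
    pdoMatMul d (exOp d a) B 1 j k = B 1 j (k - 1) + d (B 1 j k) + B 2 j k := by
  rw [pdoMatMul_apply_of_order_le_one d (exOp_apply_of_ne d a)]
  simp [Fin.sum_univ_three, exOp, exMat]

theorem pdoMatMul_exOp_apply_two :
    pdoMatMul d (exOp d a) B 2 j k = B 0 j k + a * B 1 j k := by
  rw [pdoMatMul_apply_of_order_le_one d (exOp_apply_of_ne d a)]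
  simp [Fin.sum_univ_three, exOp, exMat]

end ExOpProduct

theorem pdoMatMul_exOp_ne_pdoOne {K : Type*} [Field K] (d : Derivation ℤ K K) (a : K)
    (B : Matrix (Fin 3) (Fin 3) (ℤ → K)) : pdoMatMul d (exOp d a) B ≠ pdoOne := by
  intro hLB
  have row (i : Fin 3) (k : ℤ) : pdoMatMul d (exOp d a) B i 0 k = pdoOne i 0 k := by rw [hLB]
  have e0 := row 0 0
  have e1 := row 1 0
  have e2 := row 2 0
  have e2' := row 2 (-1)
  rw [pdoMatMul_exOp_apply_zero] at e0
  rw [pdoMatMul_exOp_apply_one] at e1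
  rw [pdoMatMul_exOp_apply_two] at e2 e2'
  simp only [Fin.isValue, zero_sub, Int.reduceNeg, pdoOne, Matrix.of_apply, and_self, ↓reduceIte,
    one_ne_zero, and_true, Fin.reduceEq, neg_eq_zero] at e0 e1 e2 e2'
  -- `e2'` and `de2` make up the degree-`0` coefficient of `∂ ∘ (row 2 of L B)`.
  have de2 := congrArg d e2
  simp only [map_add, Derivation.leibniz, smul_eq_mul, map_zero] at de2
  exact one_ne_zero (by linear_combination -e0 + e2' + de2 - a * e1)

theorem exMat_det {K : Type*} [Field K] (d : Derivation ℤ K K) (a : K) :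
    (exMat d a).det = d a := by
  simp [exMat, Matrix.det_fin_three]

/-- **Example 2.15 (ex:generic).**  For every `a ∈ 𝒦`, the operator `∂·diag(1,1,0) + M`
with `M = [[0,a',−a],[0,0,1],[1,a,0]]` is *not* invertible in `Mat_{3×3}(𝒦((∂⁻¹)))`,
even though the constant matrix `M` itself is invertible whenever `a' ≠ 0`. -/
theorem statement10 {K : Type*} [Field K] (d : Derivation ℤ K K) (a : K) :
    (¬ ∃ B : Matrix (Fin 3) (Fin 3) (ℤ → K),
        pdoBounded B ∧ pdoInverse ⇑d (exOp d a) B) ∧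
    (d a ≠ 0 → IsUnit (exMat d a)) :=
  ⟨fun ⟨B, _, hLB, _⟩ => pdoMatMul_exOp_ne_pdoOne d a B hLB, fun ha => by
    rw [Matrix.isUnit_iff_isUnit_det, exMat_det]
    exact ha.isUnit⟩
end

section
/- Let p = (p₁ ≥ ... ≥ p_r > 0) be a partition of N and f ∈ gl_N the associated shift nilpotent. For 1 ≤ i,j ≤ r and 0 ≤ k ≤ min(p_i,p_j)−1, define f_{ij;k} = Σ_{h=0}^{k} E_{(i, p_i + h − k),(j, h+1)}. Then: (a) each f_{ij;k} lies in the centralizer g^f = {x ∈ gl_N : [f,x] = 0}; (b) the elements f_{ij;k} form a basis of g^f dual to the basis {E_{(j,1),(i,p_i−k)}} of U with respect to the trace form, i.e., tr(E_{(j,1),(i,p_i−k)} · f_{i'j';k'}) = δ_{ii'} δ_{jj'} δ_{kk'}. -/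
open Matrix

/-- Index set of the pyramid attached to the partition `p` (0-based). -/
abbrev GIdx {r : ℕ} (p : Fin r → ℕ) : Type := (i : Fin r) × Fin (p i)

/-- The shift nilpotent `f = Σ_{(i,h): h < pᵢ} E_{(i,h+1),(i,h)}`. -/
def shiftNil (F : Type*) [Field F] {r : ℕ} (p : Fin r → ℕ) :
    Matrix (GIdx p) (GIdx p) F :=
  Matrix.of fun x y => if x.1 = y.1 ∧ (x.2 : ℕ) = (y.2 : ℕ) + 1 then 1 else 0

/-- The element `f_{ij;k} = Σ_{h=0}^{k} E_{(i, pᵢ+h−k),(j, h+1)}` (0-based indices). -/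
def fEl (F : Type*) [Field F] {r : ℕ} (p : Fin r → ℕ) (i j : Fin r) (k : ℕ)
    (hk : k < min (p i) (p j)) : Matrix (GIdx p) (GIdx p) F :=
  ∑ h : Fin (k + 1),
    Matrix.single
      ⟨i, ⟨p i - 1 - k + (h : ℕ), by have := h.isLt; omega⟩⟩
      ⟨j, ⟨(h : ℕ), by have := h.isLt; omega⟩⟩ 1

/-- The basis element `E_{(j,1),(i,pᵢ−k)}` of `U` (0-based indices). -/
def uEl (F : Type*) [Field F] {r : ℕ} (p : Fin r → ℕ) (i j : Fin r) (k : ℕ)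
    (hk : k < min (p i) (p j)) : Matrix (GIdx p) (GIdx p) F :=
  Matrix.single ⟨j, ⟨0, by omega⟩⟩ ⟨i, ⟨p i - 1 - k, by omega⟩⟩ 1

/-! Read a matrix `x` blockwise: block `(i, j)` is `(a, b) ↦ x_{(i,a),(j,b)}` on `ℕ × ℕ`,
extended by zero outside `p i × p j`. With this zero extension, right multiplication by `f`
shifts columns with no boundary case, and comparing `f x` with `x f` entrywise shows that `x`
centralizes `f` exactly when every block is lower-triangular Toeplitz (constant along diagonals,
zero past the first entry of its first row). Such a block is determined by its last row
`a = pᵢ - 1`, which vanishes from column `min pᵢ pⱼ` on; the entries `k` of that row are the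
coefficients of `x` on the `f_{ij;k}`. The `f_{ij;k}` are themselves of this shape, and the trace
against `E_{(j,1),(i,pᵢ−k)}` reads off the single entry `(i, pᵢ - 1 - k), (j, 0)`. -/

theorem Sigma.mk_fin_eq_mk_iff {ι : Type*} {n : ι → ℕ} {i j : ι} {a : Fin (n i)}
    {b : Fin (n j)} :
    (⟨i, a⟩ : (i : ι) × Fin (n i)) = ⟨j, b⟩ ↔ i = j ∧ (a : ℕ) = b := by
  constructor
  · rintro ⟨⟩; exact ⟨rfl, rfl⟩
  · rintro ⟨rfl, h⟩; rw [Fin.ext h]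

theorem Fin.sum_ite_val_eq {M : Type*} [AddCommMonoid M] (m t : ℕ) (c : ℕ → M) :
    ∑ k : Fin m, (if (k : ℕ) = t then c k else 0) = if t < m then c t else 0 := by
  rw [Fin.sum_univ_eq_sum_range (fun k => if k = t then c k else 0), Finset.sum_ite_eq']
  simp only [Finset.mem_range]

section BlockEntry

variable {α : Type*} {r : ℕ} {p : Fin r → ℕ}

def blockEntry [Zero α] (x : Matrix (GIdx p) (GIdx p) α) (i : Fin r) (a : ℕ) (j : Fin r)
    (b : ℕ) : α :=
  if h : a < p i ∧ b < p j then x ⟨i, a, h.1⟩ ⟨j, b, h.2⟩ else 0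

theorem blockEntry_eq_zero_of_not_lt_left [Zero α] (x : Matrix (GIdx p) (GIdx p) α) {i : Fin r}
    {a : ℕ} (ha : ¬a < p i) (j : Fin r) (b : ℕ) :
    blockEntry x i a j b = 0 := dif_neg fun h => ha h.1

theorem blockEntry_eq_zero_of_not_lt_right [Zero α] (x : Matrix (GIdx p) (GIdx p) α) (i : Fin r)
    (a : ℕ) {j : Fin r} {b : ℕ} (hb : ¬b < p j) :
    blockEntry x i a j b = 0 := dif_neg fun h => hb h.2

theorem blockEntry_sigma_mk [Zero α] (x : Matrix (GIdx p) (GIdx p) α) (u v : GIdx p) :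
    blockEntry x u.1 u.2 v.1 v.2 = x u v := dif_pos ⟨u.2.isLt, v.2.isLt⟩

theorem ext_blockEntry [Zero α] {x y : Matrix (GIdx p) (GIdx p) α}
    (h : ∀ i a j b, blockEntry x i a j b = blockEntry y i a j b) : x = y := by
  ext u v
  simpa only [blockEntry_sigma_mk] using h u.1 u.2 v.1 v.2

theorem blockEntry_sum [AddCommMonoid α] {ι : Type*} (s : Finset ι)
    (x : ι → Matrix (GIdx p) (GIdx p) α) (i : Fin r) (a : ℕ) (j : Fin r) (b : ℕ) :
    blockEntry (∑ t ∈ s, x t) i a j b = ∑ t ∈ s, blockEntry (x t) i a j b := by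
  unfold blockEntry
  split_ifs
  · exact Matrix.sum_apply _ _ _ _
  · exact Finset.sum_const_zero.symm

theorem blockEntry_smul [Zero α] {R : Type*} [SMulZeroClass R α] (c : R)
    (x : Matrix (GIdx p) (GIdx p) α) (i : Fin r) (a : ℕ) (j : Fin r) (b : ℕ) :
    blockEntry (c • x) i a j b = c • blockEntry x i a j b := by
  unfold blockEntry
  split_ifs
  · rfl
  · exact (smul_zero c).symm

end BlockEntry

section Shift

variable {F : Type*} [Field F] {r : ℕ} {p : Fin r → ℕ}

theorem shiftNil_row_succ (i : Fin r) (a : ℕ) (ha : a + 1 < p i) :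
    shiftNil F p ⟨i, a + 1, ha⟩ = Pi.single ⟨i, a, by omega⟩ 1 := by
  ext ⟨j, b⟩
  simp only [shiftNil, Matrix.of_apply, Pi.single_apply, Sigma.mk_fin_eq_mk_iff]
  grind

theorem shiftNil_row_zero (i : Fin r) (h : 0 < p i) :
    shiftNil F p ⟨i, 0, h⟩ = 0 := by
  ext ⟨j, b⟩
  simp [shiftNil]

theorem shiftNil_col (j : Fin r) (b : ℕ) (hb : b < p j) :
    (shiftNil F p)ᵀ ⟨j, b, hb⟩ =
      if h : b + 1 < p j then Pi.single ⟨j, b + 1, h⟩ 1 else 0 := by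
  ext ⟨i, a⟩
  simp only [shiftNil, Matrix.transpose_apply, Matrix.of_apply]
  split_ifs <;> simp only [Pi.single_apply, Sigma.mk_fin_eq_mk_iff, Pi.zero_apply] <;> grind

theorem blockEntry_shiftNil_mul_zero (x : Matrix (GIdx p) (GIdx p) F) (i j : Fin r) (b : ℕ) :
    blockEntry (shiftNil F p * x) i 0 j b = 0 := by
  unfold blockEntry
  split_ifs with h
  · rw [Matrix.mul_apply', shiftNil_row_zero i h.1, zero_dotProduct]
  · rfl

theorem blockEntry_shiftNil_mul_succ (x : Matrix (GIdx p) (GIdx p) F) (i : Fin r) (a : ℕ)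
    (j : Fin r) (b : ℕ) :
    blockEntry (shiftNil F p * x) i (a + 1) j b =
      if a + 1 < p i then blockEntry x i a j b else 0 := by
  split_ifs with ha
  · unfold blockEntry
    simp only [ha, true_and, show a < p i by omega]
    split_ifs
    · rw [Matrix.mul_apply', shiftNil_row_succ i a ha, single_one_dotProduct]
    · rfl
  · exact blockEntry_eq_zero_of_not_lt_left _ ha j b

theorem blockEntry_mul_shiftNil (x : Matrix (GIdx p) (GIdx p) F) (i : Fin r) (a : ℕ)
    (j : Fin r) (b : ℕ) :
    blockEntry (x * shiftNil F p) i a j b = blockEntry x i a j (b + 1) := by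
  unfold blockEntry
  by_cases ha : a < p i
  · by_cases hb : b < p j
    · simp only [ha, hb, true_and, dite_true]
      change x _ ⬝ᵥ (shiftNil F p)ᵀ ⟨j, b, hb⟩ = _
      rw [shiftNil_col j b hb]
      split_ifs
      · rw [dotProduct_single_one]
      · rw [dotProduct_zero]
    · simp only [hb, show ¬ b + 1 < p j by omega, and_false, dite_false]
  · simp only [ha, false_and, dite_false]

end Shift

section LowerToeplitz

variable {α : Type*} {n : ℕ} {g : ℕ → ℕ → α}

def IsLowerToeplitz [Zero α] (n : ℕ) (g : ℕ → ℕ → α) : Prop :=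
  (∀ b, g 0 (b + 1) = 0) ∧ ∀ a b, a + 1 < n → g (a + 1) (b + 1) = g a b

theorem IsLowerToeplitz.apply_add_add [Zero α] (hg : IsLowerToeplitz n g) {a b d : ℕ}
    (h : a + d < n) : g (a + d) (b + d) = g a b := by
  induction d with
  | zero => rfl
  | succ d ih => rw [← add_assoc, ← add_assoc, hg.2 _ _ (by omega), ih (by omega)]

theorem IsLowerToeplitz.apply_eq_ite [Zero α] (hg : IsLowerToeplitz n g) {a b : ℕ}
    (ha : a < n) : g a b = if b ≤ a then g (n - 1) (n - 1 - a + b) else 0 := by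
  split_ifs with hba
  · have := hg.apply_add_add (a := a) (b := b) (d := n - 1 - a) (by omega)
    rw [← this]
    congr 1 <;> omega
  · have := hg.apply_add_add (a := 0) (b := b - a) (d := a) (by omega)
    rw [zero_add, Nat.sub_add_cancel (by omega)] at this
    rw [this, show b - a = b - a - 1 + 1 by omega, hg.1]

end LowerToeplitz

section Centralizer

variable {F : Type*} [Field F] {r : ℕ} {p : Fin r → ℕ}

theorem shiftNil_mul_eq_mul_shiftNil_iff (x : Matrix (GIdx p) (GIdx p) F) :
    shiftNil F p * x = x * shiftNil F p ↔
      ∀ i j, IsLowerToeplitz (p i) fun a b => blockEntry x i a j b := by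
  constructor
  · intro hx i j
    have key a b := congrArg (fun y => blockEntry y i a j b) hx
    refine ⟨fun b => ?_, fun a b ha => ?_⟩
    · simpa only [blockEntry_shiftNil_mul_zero, blockEntry_mul_shiftNil] using (key 0 b).symm
    · simpa only [blockEntry_shiftNil_mul_succ, if_pos ha, blockEntry_mul_shiftNil]
        using (key (a + 1) b).symm
  · intro h
    refine ext_blockEntry fun i a j b => ?_
    rw [blockEntry_mul_shiftNil]
    cases a with
    | zero => rw [blockEntry_shiftNil_mul_zero, ← (h i j).1 b]
    | succ a =>
      rw [blockEntry_shiftNil_mul_succ]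
      split_ifs with ha
      · exact ((h i j).2 a b ha).symm
      · exact (blockEntry_eq_zero_of_not_lt_left x (by omega) j (b + 1)).symm

theorem blockEntry_fEl (i' j' : Fin r) (k : ℕ) (hk : k < min (p i') (p j')) (i : Fin r) (a : ℕ)
    (j : Fin r) (b : ℕ) :
    blockEntry (fEl F p i' j' k hk) i a j b =
      if i' = i ∧ j' = j ∧ a < p i ∧ k = p i - 1 - a + b then 1 else 0 := by
  unfold blockEntry fEl
  split_ifs with hab hcond hcond
  · obtain ⟨rfl, rfl, -, hk'⟩ := hcond
    rw [Matrix.sum_apply]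
    simp only [Matrix.single_apply, Sigma.mk_fin_eq_mk_iff, true_and, and_comm, ite_and]
    rw [Fin.sum_ite_val_eq (k + 1) b fun h => if p i' - 1 - k + h = a then 1 else 0,
      if_pos (by omega), if_pos (by omega)]
  · rw [Matrix.sum_apply]
    refine Finset.sum_eq_zero fun h _ => ?_
    simp only [Matrix.single_apply, Sigma.mk_fin_eq_mk_iff]
    rw [if_neg]
    rintro ⟨⟨rfl, ha⟩, rfl, hb⟩
    exact hcond ⟨rfl, rfl, hab.1, by omega⟩
  · obtain ⟨rfl, rfl, ha, hk'⟩ := hcond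
    exact absurd ⟨ha, by omega⟩ hab
  · rfl

theorem shiftNil_mul_fEl (i j : Fin r) (k : ℕ) (hk : k < min (p i) (p j)) :
    shiftNil F p * fEl F p i j k hk = fEl F p i j k hk * shiftNil F p := by
  refine (shiftNil_mul_eq_mul_shiftNil_iff _).2 fun i' j' => ⟨fun b => ?_, fun a b ha => ?_⟩
  · simp only [blockEntry_fEl]
    rw [if_neg]
    rintro ⟨rfl, rfl, -, hk'⟩
    omega
  · simp only [blockEntry_fEl]
    refine if_congr ?_ rfl rfl
    constructor <;> rintro ⟨rfl, rfl, -, hk'⟩ <;> exact ⟨rfl, rfl, by omega, by omega⟩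

theorem trace_uEl_mul_fEl (i j : Fin r) (k : ℕ) (hk : k < min (p i) (p j)) (i' j' : Fin r)
    (k' : ℕ) (hk' : k' < min (p i') (p j')) :
    (uEl F p i j k hk * fEl F p i' j' k' hk').trace =
      if i = i' ∧ j = j' ∧ k = k' then 1 else 0 := by
  rw [uEl, Matrix.trace_single_mul, one_smul, ← blockEntry_sigma_mk (fEl F p i' j' k' hk'),
    blockEntry_fEl]
  refine if_congr ?_ rfl rfl
  constructor
  · rintro ⟨rfl, rfl, -, hk''⟩
    exact ⟨rfl, rfl, by simp only at hk''; omega⟩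
  · rintro ⟨rfl, rfl, rfl⟩
    exact ⟨rfl, rfl, by simp only; omega, by simp only; omega⟩

theorem eq_sum_fEl_of_commute {x : Matrix (GIdx p) (GIdx p) F}
    (hx : shiftNil F p * x = x * shiftNil F p) :
    x = ∑ i, ∑ j, ∑ k : Fin (min (p i) (p j)),
      blockEntry x i (p i - 1) j k • fEl F p i j k k.isLt := by
  refine ext_blockEntry fun i a j b => ?_
  simp only [blockEntry_sum, blockEntry_smul, blockEntry_fEl, smul_eq_mul, mul_ite, mul_one,
    mul_zero]
  by_cases ha : a < p i
  swap
  · simp [blockEntry_eq_zero_of_not_lt_left x ha, ha]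
  rw [Fintype.sum_eq_single i fun i' hi' => by simp [hi'],
    Fintype.sum_eq_single j fun j' hj' => by simp [hj']]
  simp only [true_and, ha]
  rw [Fin.sum_ite_val_eq _ _ fun k => blockEntry x i (p i - 1) j k,
    ((shiftNil_mul_eq_mul_shiftNil_iff x).1 hx i j).apply_eq_ite ha]
  by_cases hba : b ≤ a
  · by_cases hb : p i - 1 - a + b < p j
    · rw [if_pos hba, if_pos (by omega)]
    · rw [if_pos hba, blockEntry_eq_zero_of_not_lt_right x i (p i - 1) hb, ite_self]
  · rw [if_neg hba, if_neg (by omega)]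

end Centralizer

theorem statement12_general {F : Type*} [Field F] {r : ℕ} (p : Fin r → ℕ) :
    (∀ (i j : Fin r) (k : ℕ) (hk : k < min (p i) (p j)),
        shiftNil F p * fEl F p i j k hk = fEl F p i j k hk * shiftNil F p) ∧
    (∀ (i j : Fin r) (k : ℕ) (hk : k < min (p i) (p j))
        (i' j' : Fin r) (k' : ℕ) (hk' : k' < min (p i') (p j')),
        Matrix.trace (uEl F p i j k hk * fEl F p i' j' k' hk') =
          if i = i' ∧ j = j' ∧ k = k' then 1 else 0) ∧
    (∀ x : Matrix (GIdx p) (GIdx p) F, shiftNil F p * x = x * shiftNil F p →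
        x ∈ Submodule.span F
          {A | ∃ (i j : Fin r) (k : ℕ) (hk : k < min (p i) (p j)), A = fEl F p i j k hk}) := by
  refine ⟨shiftNil_mul_fEl, trace_uEl_mul_fEl, fun x hx => ?_⟩
  rw [eq_sum_fEl_of_commute hx]
  exact Submodule.sum_mem _ fun i _ => Submodule.sum_mem _ fun j _ => Submodule.sum_mem _
    fun k _ => Submodule.smul_mem _ _ (Submodule.subset_span ⟨i, j, k, k.isLt, rfl⟩)

/-- **Proposition 5.2 (prop:gf).**  (a) Each `f_{ij;k}` lies in the centralizer `g^f`;
(b) the `f_{ij;k}` form a basis of `g^f` dual to the basis `{E_{(j,1),(i,pᵢ−k)}}` of `U`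
with respect to the trace form:
`tr(E_{(j,1),(i,pᵢ−k)} · f_{i'j';k'}) = δ_{ii'}δ_{jj'}δ_{kk'}`; in particular the
`f_{ij;k}` span the centralizer of `f`. -/
theorem statement12 {F : Type*} [Field F] [CharZero F] {N r : ℕ} (p : Fin r → ℕ)
    (hp : ∀ i, 0 < p i) (hsort : ∀ i j : Fin r, i ≤ j → p j ≤ p i)
    (hN : ∑ i, p i = N) :
    (∀ (i j : Fin r) (k : ℕ) (hk : k < min (p i) (p j)),
        shiftNil F p * fEl F p i j k hk = fEl F p i j k hk * shiftNil F p) ∧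
    (∀ (i j : Fin r) (k : ℕ) (hk : k < min (p i) (p j))
        (i' j' : Fin r) (k' : ℕ) (hk' : k' < min (p i') (p j')),
        Matrix.trace (uEl F p i j k hk * fEl F p i' j' k' hk') =
          if i = i' ∧ j = j' ∧ k = k' then 1 else 0) ∧
    (∀ x : Matrix (GIdx p) (GIdx p) F, shiftNil F p * x = x * shiftNil F p →
        x ∈ Submodule.span F
          {A | ∃ (i j : Fin r) (k : ℕ) (hk : k < min (p i) (p j)), A = fEl F p i j k hk}) :=
  statement12_general p
end

section
/- Let p = (p₁ ≥ ... ≥ p_r > 0) be a partition of N and f the associated shift nilpotent. Define the linear map from U = span{E_{(j,1),(i,p_i−ℓ)}} to gl_N sending E_{(j,1),(i,p_i−ℓ)} to Σ_{k=0}^{ℓ} E_{(j,k+1),(i,p_i+k−ℓ)}, for 0 ≤ ℓ ≤ min(p_i,p_j)−1. Then this map is injective and its image lies in the centralizer of the 'right-shift' operator ẽ = Σ_{(i,h): h < p_i} E_{(i,h),(i,h+1)}. Consequently dim U ≤ dim g^{ẽ} = dim g^f. -/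
/-! `ẽ * M = M * ẽ` says `M (x+1, y) = M (x, y-1)`, with out-of-range entries read as `0`: every
block of `M` is constant along diagonals, and a nonzero diagonal must meet both the first row and
the last column. The image of `E_{(j,1),(i,pᵢ−ℓ)}` is exactly such a diagonal of ones, running from
`(1, pᵢ−ℓ)` to `(ℓ+1, pᵢ)`. Its entry at the position of `E_{(j,1),(i,pᵢ−ℓ)}` is `1`, while the
images of the other basis vectors of `U` vanish there; so these entries form a family dual to the
images, which are therefore linearly independent. -/

open Matrix

/-- Index set for the basis of `U`: triples `(j, i, ℓ)` with `ℓ < min(pᵢ, pⱼ)`. -/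
abbrev TIdx {r : ℕ} (p : Fin r → ℕ) : Type :=
  {t : Fin r × Fin r × ℕ // t.2.2 < min (p t.2.1) (p t.1)}

/-- The "right-shift" operator `ẽ = Σ_{(i,h): h < pᵢ} E_{(i,h),(i,h+1)}`. -/
def shiftE (F : Type*) [Field F] {r : ℕ} (p : Fin r → ℕ) :
    Matrix (GIdx p) (GIdx p) F :=
  Matrix.of fun x y => if x.1 = y.1 ∧ (x.2 : ℕ) + 1 = (y.2 : ℕ) then 1 else 0

/-- The map \eqref{eq:ge} on basis elements:
`E_{(j,1),(i,pᵢ−ℓ)} ↦ Σ_{k=0}^{ℓ} E_{(j,k+1),(i,pᵢ+k−ℓ)}` (0-based indices). -/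
def geMap (F : Type*) [Field F] {r : ℕ} (p : Fin r → ℕ) (t : TIdx p) :
    Matrix (GIdx p) (GIdx p) F :=
  ∑ k : Fin (t.1.2.2 + 1),
    Matrix.single
      ⟨t.1.1, ⟨(k : ℕ), by have h1 := t.2; have h2 := k.isLt; omega⟩⟩
      ⟨t.1.2.1, ⟨p t.1.2.1 - 1 - t.1.2.2 + (k : ℕ), by have h1 := t.2; have h2 := k.isLt; omega⟩⟩ 1

lemma GIdx.mk_eq_mk_iff {r : ℕ} {p : Fin r → ℕ} {a c : Fin r} {b : Fin (p a)} {d : Fin (p c)} :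
    (⟨a, b⟩ : GIdx p) = ⟨c, d⟩ ↔ a = c ∧ (b : ℕ) = d := by
  constructor
  · rintro ⟨⟩
    exact ⟨rfl, rfl⟩
  · rintro ⟨rfl, h⟩
    exact congrArg _ (Fin.ext h)

section

variable {F : Type*} [Field F] {r : ℕ} {p : Fin r → ℕ}

lemma geMap_apply (t : TIdx p) (x y : GIdx p) :
    geMap F p t x y =
      if x.1 = t.1.1 ∧ y.1 = t.1.2.1 ∧ (x.2 : ℕ) ≤ t.1.2.2 ∧
        (y.2 : ℕ) = p t.1.2.1 - 1 - t.1.2.2 + x.2 then 1 else 0 := by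
  obtain ⟨⟨j, i, l⟩, ht⟩ := t
  obtain ⟨x₁, x₂⟩ := x
  obtain ⟨y₁, y₂⟩ := y
  simp only [geMap, Matrix.sum_apply, Matrix.single_apply, GIdx.mk_eq_mk_iff]
  split_ifs with h
  · obtain ⟨rfl, rfl, hx, hy⟩ := h
    rw [Finset.sum_eq_single_of_mem (⟨x₂, by omega⟩ : Fin (l + 1)) (Finset.mem_univ _)]
    · simp [hy]
    · intro k _ hk
      rw [if_neg]
      rintro ⟨⟨-, hk'⟩, -⟩
      exact hk (Fin.ext hk')
  · refine Finset.sum_eq_zero fun k _ => if_neg ?_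
    rintro ⟨⟨rfl, hk⟩, rfl, hy⟩
    exact h ⟨rfl, rfl, by omega, by omega⟩

lemma shiftE_mul_apply (M : Matrix (GIdx p) (GIdx p) F) (x y : GIdx p) :
    (shiftE F p * M) x y =
      if h : (x.2 : ℕ) + 1 < p x.1 then M ⟨x.1, ⟨x.2 + 1, h⟩⟩ y else 0 := by
  rw [Matrix.mul_apply]
  split_ifs with h
  · rw [Finset.sum_eq_single_of_mem ⟨x.1, ⟨x.2 + 1, h⟩⟩ (Finset.mem_univ _)]
    · simp [shiftE]
    · rintro ⟨z₁, z₂⟩ _ hz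
      rw [shiftE, Matrix.of_apply, if_neg, zero_mul]
      rintro ⟨rfl, hz'⟩
      exact hz (GIdx.mk_eq_mk_iff.mpr ⟨rfl, hz'.symm⟩)
  · refine Finset.sum_eq_zero fun ⟨z₁, z₂⟩ _ => ?_
    rw [shiftE, Matrix.of_apply, if_neg, zero_mul]
    rintro ⟨rfl, hz⟩
    exact h (hz ▸ z₂.isLt)

lemma mul_shiftE_apply (M : Matrix (GIdx p) (GIdx p) F) (x y : GIdx p) :
    (M * shiftE F p) x y =
      if h : 1 ≤ (y.2 : ℕ) then M x ⟨y.1, ⟨y.2 - 1, by omega⟩⟩ else 0 := by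
  rw [Matrix.mul_apply]
  split_ifs with h
  · rw [Finset.sum_eq_single_of_mem ⟨y.1, ⟨y.2 - 1, by omega⟩⟩ (Finset.mem_univ _)]
    · simp [shiftE, Nat.sub_add_cancel h]
    · rintro ⟨z₁, z₂⟩ _ hz
      rw [shiftE, Matrix.of_apply, if_neg, mul_zero]
      rintro ⟨rfl, hz'⟩
      exact hz (GIdx.mk_eq_mk_iff.mpr ⟨rfl, by simp only at hz' ⊢; omega⟩)
  · refine Finset.sum_eq_zero fun z _ => ?_
    rw [shiftE, Matrix.of_apply, if_neg, mul_zero]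
    omega

lemma shiftE_commute_geMap (t : TIdx p) : Commute (shiftE F p) (geMap F p t) := by
  obtain ⟨⟨j, i, l⟩, ht⟩ := t
  rw [lt_min_iff] at ht
  refine Matrix.ext fun ⟨x₁, x₂⟩ ⟨y₁, y₂⟩ => ?_
  rw [shiftE_mul_apply, mul_shiftE_apply]
  simp only [geMap_apply]
  by_cases hx : x₁ = j <;> by_cases hy : y₁ = i
  · subst hx hy
    split_ifs <;> simp_all <;> omega
  all_goals simp [hx, hy]

namespace TIdx

/- `(row t, col t)` is the (0-based) position of the basis vector `E_{(j,1),(i,pᵢ−ℓ)}` of `U`. -/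
def row (t : TIdx p) : GIdx p := ⟨t.1.1, ⟨0, by have := t.2; grind⟩⟩

def col (t : TIdx p) : GIdx p := ⟨t.1.2.1, ⟨p t.1.2.1 - 1 - t.1.2.2, by have := t.2; grind⟩⟩

end TIdx

lemma geMap_apply_row_col (s t : TIdx p) :
    geMap F p s t.row t.col = (Pi.single s 1 : TIdx p → F) t := by
  obtain ⟨⟨j, i, l⟩, ht⟩ := t
  obtain ⟨⟨j', i', l'⟩, hs⟩ := s
  rw [lt_min_iff] at ht hs
  simp only [geMap_apply, TIdx.row, TIdx.col, Pi.single_apply, Subtype.ext_iff, Prod.ext_iff]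
  split_ifs <;> grind

lemma linearIndependent_geMap : LinearIndependent F (geMap F p) := by
  classical
  let entries : Matrix (GIdx p) (GIdx p) F →ₗ[F] TIdx p → F :=
    LinearMap.pi fun t => Matrix.entryLinearMap F F t.row t.col
  have h : entries ∘ geMap F p = fun s => Pi.single s 1 :=
    funext fun s => funext (geMap_apply_row_col s)
  exact .of_comp entries (h ▸ Pi.linearIndependent_single_one (TIdx p) F)

end

theorem statement16_general {F : Type*} [Field F] {r : ℕ} (p : Fin r → ℕ) :
    (∀ t : TIdx p, shiftE F p * geMap F p t = geMap F p t * shiftE F p) ∧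
    LinearIndependent F (geMap F p) :=
  ⟨fun t => (shiftE_commute_geMap t).eq, linearIndependent_geMap⟩

/-- **The map \eqref{eq:ge} is injective with image in `g^{ẽ}`** (part of the proof of
Proposition 5.1): each image `Σ_{k=0}^{ℓ} E_{(j,k+1),(i,pᵢ+k−ℓ)}` commutes with the
right-shift operator `ẽ`, and the family of images of the basis of `U` is linearly
independent. -/
theorem statement16 {F : Type*} [Field F] [CharZero F] {N r : ℕ} (p : Fin r → ℕ)
    (hp : ∀ i, 0 < p i) (hsort : ∀ i j : Fin r, i ≤ j → p j ≤ p i)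
    (hN : ∑ i, p i = N) :
    (∀ t : TIdx p, shiftE F p * geMap F p t = geMap F p t * shiftE F p) ∧
    LinearIndependent F (geMap F p) :=
  statement16_general p
end

section
/- Consider the principal nilpotent case of gl_N (partition p = N, so r = r₁ = 1). The Adler-type operator is the generic monic differential operator L₁(∂) = −(−∂)^N + Σ_{k=0}^{N−1} w_k(−∂)^k over the differential polynomial algebra 𝒲 = 𝔽[w_k^{(n)} : 0 ≤ k ≤ N−1, n ≥ 0]. Then the first λ-bracket determined by the bi-Adler identity on generators is: {w_i _λ w_j}₁ = Σ_{n=0}^{N−i−j−1} ( binom(n+j, j)·(−λ)^n − binom(n+i, i)·(λ+∂)^n ) · w_{i+j+n+1}, where by convention w_N = −1. In particular this bracket is skewsymmetric: {w_j _λ w_i}₁ = −{w_i _{−λ−∂} w_j}₁ (with ∂ acting on coefficients). -/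
open scoped BigOperators

/-- Coefficient of `z^p w^q λ^s` in `X(w+λ+∂) ι_z(z−w−λ−∂)⁻¹ Y*(λ−z)` (scalar case),
for pseudodifferential operators with coefficient functions `x`, `y`. -/
noncomputable def adlerRHS1 {V : Type*} [CommRing V] (d : V → V) (x y : ℤ → V)
    (p q : ℤ) (s : ℕ) : V :=
  ∑ᶠ (m : ℤ) (l : ℤ) (n : ℕ) (i : ℕ) (j : ℕ) (u : ℕ) (v : ℕ),
    if l - (i : ℤ) - (n : ℤ) - 1 = p ∧ m + (n : ℤ) - (j : ℤ) = q ∧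
        i + j = s + u + v ∧ u ≤ i ∧ v ≤ j then
      x m * ((intBin (m + n) j : ℤ) : V) * (j.choose v : V) *
        ((intBin l i : ℤ) : V) * (-1 : V) ^ i * (i.choose u : V) * d^[u + v] (y l)
    else 0

/-- Coefficient of `z^p w^q λ^s` in `X(z) ι_z(z−w−λ−∂)⁻¹ Y(w)` (scalar case). -/
noncomputable def adlerRHS2 {V : Type*} [CommRing V] (d : V → V) (x y : ℤ → V)
    (p q : ℤ) (s : ℕ) : V :=
  ∑ᶠ (m : ℤ) (l : ℤ) (n : ℕ) (j : ℕ) (v : ℕ),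
    if m - (n : ℤ) - 1 = p ∧ (n : ℤ) - (j : ℤ) + l = q ∧ j = s + v ∧ j ≤ n ∧ v ≤ j then
      x m * (n.choose j : V) * (j.choose v : V) * d^[v] (y l)
    else 0

/-- The coefficient function of the constant operator `1`. -/
def oneC {V : Type*} [CommRing V] : ℤ → V := fun m => if m = 0 then 1 else 0

/-- The coefficient function of the generic operator
`L₁(∂) = −(−∂)^N + Σ_{k=0}^{N−1} w_k (−∂)^k`:
the coefficient of `∂^m` is `(−1)^{N+1}` for `m = N`, `(−1)^k w_k` for `0 ≤ m = k < N`,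
and `0` otherwise. -/
def genC {V : Type*} [CommRing V] (N : ℕ) (w : ℕ → V) : ℤ → V := fun m =>
  if m = (N : ℤ) then (-1 : V) ^ (N + 1)
  else if 0 ≤ m ∧ m < (N : ℤ) then (-1 : V) ^ m.toNat * w m.toNat
  else 0

/-- `w_k` for `k < N`, and `w_N = −1` by convention. -/
def wExt {V : Type*} [CommRing V] (N : ℕ) (w : ℕ → V) (k : ℕ) : V :=
  if k = N then -1 else w k

/-!
Write `L_k` for the coefficient of `∂^k` in `L₁`, so that `w_k = (-1)^k L_k`. With `X = 1` only the
`m = 0` terms of the first Adler sum survive and the second sum vanishes for `p ≥ 0`, so the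
bi-Adler identity at `(p, q) = (i, j)` expresses `{w_i _λ w_j}₁` through the `L_{i+j+t+1}`, `t ≥ 0`.
For fixed `t` the inner binomial sums collapse: one by Vandermonde's identity, the other,
`∑_{a+b=t} (-1)^a binom(i+j+t+1, a) binom(j+b, j) = (-1)^t binom(i+t, t)`, by Vandermonde's
identity with the negative upper index `-(j+1)`.

For skewsymmetry, the substitution `λ ↦ -λ-∂` turns `(-λ)^n` into `(λ+∂)^n` and, by the
orthogonality `∑_n (-1)^n binom(m, n) binom(n, s) = (-1)^s δ_{ms}`, `(λ+∂)^m` into `(-λ)^m`; this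
exchanges the two halves of the formula together with `i` and `j`.
-/

open Finset

section Finsum

variable {M : Type*} [AddCommMonoid M]

theorem finsum_finsum_ite_add_eq (k : ℕ) (f : ℕ → ℕ → M) :
    ∑ᶠ (u : ℕ) (v : ℕ), (if u + v = k then f u v else 0) = ∑ p ∈ antidiagonal k, f p.1 p.2 := by
  have hinner (u : ℕ) : ∑ᶠ v : ℕ, (if u + v = k then f u v else 0) =
      if u < k + 1 then f u (k - u) else 0 := by
    rw [finsum_eq_single _ (k - u) fun v hv => if_neg (by omega)]
    by_cases hu : u < k + 1
    · rw [if_pos (by omega), if_pos hu]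
    · rw [if_neg (by omega), if_neg hu]
  rw [finsum_congr hinner, finsum_eq_sum_of_support_subset _ (s := range (k + 1))
    fun u hu => by_contra fun h => hu (if_neg (by simpa using h)),
    Nat.sum_antidiagonal_eq_sum_range_succ f]
  exact sum_congr rfl fun u hu => if_pos (mem_range.mp hu)

theorem finsum_eq_finsum_comp_of_support_subset_range {α β : Type*} {f : α → M} {g : β → α}
    (hg : Function.Injective g) (hf : Function.support f ⊆ Set.range g) :
    ∑ᶠ a, f a = ∑ᶠ b, f (g b) := by
  rw [← finsum_mem_univ, ← finsum_mem_range hg]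
  exact finsum_mem_inter_support_eq' _ _ _ fun a ha => by simpa using hf ha

theorem finsum_nat_eq_sum_antidiagonal {f : ℕ → M} (j t : ℕ)
    (hf : ∀ n, f n ≠ 0 → j ≤ n ∧ n ≤ j + t) :
    ∑ᶠ n, f n = ∑ p ∈ antidiagonal t, f (j + p.1) := by
  rw [finsum_eq_finsum_comp_of_support_subset_range (add_right_injective j)
      fun n hn => ⟨n - j, Nat.add_sub_cancel' (hf n hn).1⟩,
    finsum_eq_sum_of_support_subset _ (s := range (t + 1))
      fun b hb => mem_range.mpr (by have := hf _ hb; omega),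
    Nat.sum_antidiagonal_eq_sum_range_succ_mk]

end Finsum

theorem intBin_natCast (n k : ℕ) : intBin n k = n.choose k := by
  rw [intBin, ← descPochhammer_eval_eq_prod_range, descPochhammer_eval_eq_descFactorial,
    Nat.descFactorial_eq_factorial_mul_choose, Nat.cast_mul,
    Int.mul_ediv_cancel_left _ (by exact_mod_cast (Nat.factorial_pos k).ne')]

theorem sum_antidiagonal_choose_mul_neg_one_pow_mul_choose (m j t : ℕ) :
    ∑ p ∈ antidiagonal t, ((j + p.1).choose j : ℤ) * ((-1) ^ p.2 * (m + j + 1).choose p.2) =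
      (-1) ^ t * m.choose t := by
  have h := Ring.add_choose_eq (r := -((j + 1 : ℕ) : ℤ)) (s := ((m + j + 1 : ℕ) : ℤ)) t
    (Commute.all _ _)
  rw [show -((j + 1 : ℕ) : ℤ) + ((m + j + 1 : ℕ) : ℤ) = (m : ℤ) by push_cast; ring,
    Ring.choose_natCast] at h
  rw [h, mul_sum]
  refine sum_congr rfl fun p hp => ?_
  rw [Ring.choose_natCast, Ring.choose_neg, show ((j + 1 : ℕ) : ℤ) + p.1 - 1 = ((j + p.1 : ℕ) : ℤ) by
    push_cast; ring, Ring.choose_natCast, Nat.choose_symm_add, Units.smul_def,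
    Int.coe_negOnePow_natCast, smul_eq_mul, ← mem_antidiagonal.mp hp]
  ring_nf
  simp [pow_mul']

theorem sum_Icc_neg_one_pow_mul_choose_mul_choose (s m : ℕ) :
    ∑ n ∈ Icc s m, (-1 : ℤ) ^ n * m.choose n * n.choose s = if m = s then (-1) ^ s else 0 := by
  rcases lt_or_ge m s with hms | hsm
  · rw [Icc_eq_empty_of_lt hms, sum_empty, if_neg hms.ne]
  obtain ⟨k, rfl⟩ := Nat.exists_eq_add_of_le hsm
  rw [← Ico_add_one_right_eq_Icc, sum_Ico_eq_sum_range, show s + k + 1 - s = k + 1 by omega]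
  have hterm (n : ℕ) : (-1 : ℤ) ^ (s + n) * (s + k).choose (s + n) * (s + n).choose s =
      (-1) ^ s * (s + k).choose s * ((-1) ^ n * k.choose n) := by
    rw [mul_assoc, ← Nat.cast_mul, Nat.choose_mul (Nat.le_add_right s n)]
    simp only [Nat.add_sub_cancel_left, pow_add, Nat.cast_mul]
    ring
  simp only [hterm, ← mul_sum, Int.alternating_sum_range_choose, Nat.add_eq_left]
  split_ifs <;> simp_all

section Additive

variable {V : Type*} [Ring V]

theorem map_neg_one_pow_mul_of_map_add {f : V → V} (hf : ∀ a b, f (a + b) = f a + f b) (k : ℕ)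
    (x : V) : f ((-1) ^ k * x) = (-1) ^ k * f x := by
  simpa [zsmul_eq_mul] using map_zsmul (AddMonoidHom.mk' f hf) ((-1) ^ k) x

variable {F : Type*} [FunLike F V V] [AddMonoidHomClass F V V]

theorem iterate_map_sum (d : F) (k : ℕ) {ι : Type*} (s : Finset ι) (f : ι → V) :
    (⇑d)^[k] (∑ x ∈ s, f x) = ∑ x ∈ s, (⇑d)^[k] (f x) :=
  map_sum ((show AddMonoid.End V from (d : V →+ V)) ^ k) f s

theorem iterate_map_neg_one_pow_mul (d : F) (n k : ℕ) (x : V) :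
    (⇑d)^[n] ((-1) ^ k * x) = (-1) ^ k * (⇑d)^[n] x :=
  map_neg_one_pow_mul_of_map_add (iterate_map_add d n) k x

theorem iterate_map_natCast_mul (d : F) (k c : ℕ) (x : V) :
    (⇑d)^[k] (c * x) = c * (⇑d)^[k] x := by
  rw [← nsmul_eq_mul, iterate_map_nsmul, nsmul_eq_mul]

end Additive

section AdlerSums

variable {V : Type*} [CommRing V] (d : V → V) (y : ℤ → V)

noncomputable def adlerRHS1OneSlice (p q : ℤ) (s : ℕ) (l : ℤ) (n : ℕ) : V :=
  ∑ᶠ (i : ℕ) (j : ℕ) (u : ℕ) (v : ℕ),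
    if l - (i : ℤ) - (n : ℤ) - 1 = p ∧ (n : ℤ) - (j : ℤ) = q ∧
        i + j = s + u + v ∧ u ≤ i ∧ v ≤ j then
      ((intBin n j : ℤ) : V) * (j.choose v : V) *
        ((intBin l i : ℤ) : V) * (-1 : V) ^ i * (i.choose u : V) * d^[u + v] (y l)
    else 0

theorem adlerRHS1_oneC (p q : ℤ) (s : ℕ) :
    adlerRHS1 d oneC y p q s = ∑ᶠ (l : ℤ) (n : ℕ), adlerRHS1OneSlice d y p q s l n := by
  rw [adlerRHS1, finsum_eq_single _ 0 fun m hm => by simp [oneC, hm]]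
  simp [oneC, adlerRHS1OneSlice]

theorem adlerRHS1OneSlice_eq_zero {i j s : ℕ} {l : ℤ} {n : ℕ} (h : ¬(j ≤ n ∧ (i : ℤ) + n + 1 ≤ l)) :
    adlerRHS1OneSlice d y i j s l n = 0 :=
  finsum_eq_zero_of_forall_eq_zero fun a => finsum_eq_zero_of_forall_eq_zero fun b =>
    finsum_eq_zero_of_forall_eq_zero fun u => finsum_eq_zero_of_forall_eq_zero fun v =>
      if_neg fun hc => h (by omega)

theorem finsum_finsum_ite_choose_mul_choose (a b s : ℕ) (c : V) (x : ℕ → V) :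
    ∑ᶠ (u : ℕ) (v : ℕ), (if a + b = s + u + v ∧ u ≤ a ∧ v ≤ b then
        c * (a.choose u * b.choose v : V) * x (u + v) else 0) =
      c * (a + b).choose s * x (a + b - s) := by
  by_cases hs : s ≤ a + b
  · have hterm (u v : ℕ) :
        (if a + b = s + u + v ∧ u ≤ a ∧ v ≤ b then
          c * (a.choose u * b.choose v : V) * x (u + v) else 0) =
        if u + v = a + b - s then c * (a.choose u * b.choose v : V) * x (a + b - s) else 0 := by
      by_cases huv : u + v = a + b - s
      · rw [if_pos huv, ← huv]
        by_cases hle : u ≤ a ∧ v ≤ b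
        · rw [if_pos (by omega)]
        · rw [if_neg (by omega)]
          rcases not_and_or.mp hle with h | h <;>
            simp [Nat.choose_eq_zero_of_lt (not_le.mp h)]
      · rw [if_neg (by omega), if_neg huv]
    rw [finsum_congr fun u => finsum_congr (hterm u), finsum_finsum_ite_add_eq, ← sum_mul,
      ← mul_sum, ← Nat.choose_symm hs, Nat.add_choose_eq a b]
    push_cast
    ring
  · rw [Nat.choose_eq_zero_of_lt (not_le.mp hs), Nat.cast_zero, mul_zero, zero_mul]
    exact finsum_eq_zero_of_forall_eq_zero fun u => finsum_eq_zero_of_forall_eq_zero fun v =>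
      if_neg fun hc => hs (by omega)

theorem adlerRHS1OneSlice_natCast (i j s a b : ℕ) :
    adlerRHS1OneSlice d y i j s (i + j + 1 + (b + a) : ℕ) (j + b) =
      ((j + b).choose j * (i + j + 1 + (b + a)).choose a * (-1) ^ a * (a + b).choose s : V) *
        d^[a + b - s] (y (i + j + 1 + (b + a) : ℕ)) := by
  set L : ℕ := i + j + 1 + (b + a)
  rw [adlerRHS1OneSlice,
    finsum_eq_single _ a fun a' ha' => finsum_eq_zero_of_forall_eq_zero fun b' =>
      finsum_eq_zero_of_forall_eq_zero fun u => finsum_eq_zero_of_forall_eq_zero fun v =>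
        if_neg fun hc => ha' (by omega),
    finsum_eq_single _ b fun b' hb' => finsum_eq_zero_of_forall_eq_zero fun u =>
      finsum_eq_zero_of_forall_eq_zero fun v => if_neg fun hc => hb' (by omega)]
  have hl : (L : ℤ) - a - (j + b : ℕ) - 1 = i := by omega
  have hn : ((j + b : ℕ) : ℤ) - b = j := by omega
  simp only [hl, hn, true_and, intBin_natCast, ← Nat.choose_symm_add]
  calc _ = ∑ᶠ (u : ℕ) (v : ℕ), (if a + b = s + u + v ∧ u ≤ a ∧ v ≤ b then
          ((j + b).choose j * L.choose a * (-1) ^ a : V) * (a.choose u * b.choose v : V) *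
            d^[u + v] (y L) else 0) :=
        finsum_congr fun u => finsum_congr fun v => by split_ifs <;> push_cast <;> ring
    _ = _ := finsum_finsum_ite_choose_mul_choose a b s _ fun k => d^[k] (y L)

theorem adlerRHS1_oneC_natCast (i j s : ℕ) :
    adlerRHS1 d oneC y i j s = ∑ᶠ t : ℕ,
      ((-1) ^ t * (i + t).choose t * t.choose s : V) * d^[t - s] (y (i + j + 1 + t : ℕ)) := by
  have hslice {l : ℤ} {n : ℕ} (h : adlerRHS1OneSlice d y i j s l n ≠ 0) :
      j ≤ n ∧ (i : ℤ) + n + 1 ≤ l :=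
    by_contra fun hc => h (adlerRHS1OneSlice_eq_zero d y hc)
  rw [adlerRHS1_oneC, finsum_eq_finsum_comp_of_support_subset_range
    (g := fun t : ℕ => ((i + j + 1 + t : ℕ) : ℤ)) (fun a b h => by simpa using h)]
  · refine finsum_congr fun t => ?_
    rw [finsum_nat_eq_sum_antidiagonal j t fun n hn => by have := hslice hn; omega]
    have hterm : ∀ p ∈ antidiagonal t, adlerRHS1OneSlice d y i j s (i + j + 1 + t : ℕ) (j + p.1) =
        (t.choose s : V) *
          (((j + p.1).choose j * ((-1) ^ p.2 * ((i + t) + j + 1).choose p.2) : ℤ) : V) *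
            d^[t - s] (y (i + j + 1 + t : ℕ)) := by
      intro p hp
      rw [← mem_antidiagonal.mp hp, adlerRHS1OneSlice_natCast, add_comm p.2 p.1]
      push_cast
      ring_nf
    rw [sum_congr rfl hterm, ← sum_mul, ← mul_sum, ← Int.cast_sum,
      sum_antidiagonal_choose_mul_neg_one_pow_mul_choose]
    push_cast
    ring
  · intro l hl
    obtain ⟨n, hn⟩ : ∃ n, adlerRHS1OneSlice d y i j s l n ≠ 0 := by
      by_contra! h
      exact hl (finsum_eq_zero_of_forall_eq_zero h)
    have := hslice hn
    exact ⟨(l - (i + j + 1)).toNat, by push_cast; omega⟩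

theorem adlerRHS2_oneC_of_nonneg {p : ℤ} (hp : 0 ≤ p) (q : ℤ) (s : ℕ) :
    adlerRHS2 d oneC y p q s = 0 := by
  refine finsum_eq_zero_of_forall_eq_zero fun m => ?_
  by_cases hm : m = 0
  · exact finsum_eq_zero_of_forall_eq_zero fun l => finsum_eq_zero_of_forall_eq_zero fun n =>
      finsum_eq_zero_of_forall_eq_zero fun j => finsum_eq_zero_of_forall_eq_zero fun v =>
        if_neg fun hc => by omega
  · simp [oneC, hm]

end AdlerSums

section GenericOperator

variable {V : Type*} [CommRing V] {F : Type*} [FunLike F V V] [AddMonoidHomClass F V V]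

theorem genC_natCast (N : ℕ) (w : ℕ → V) (k : ℕ) :
    genC N w k = if k ≤ N then (-1) ^ k * wExt N w k else 0 := by
  unfold genC wExt
  by_cases hk : k = N
  · subst hk
    simp [pow_succ]
  · by_cases hlt : k < N
    · simp [hk, hlt, hlt.le]
    · simp [hk, hlt, show ¬ k ≤ N by omega]

theorem adlerRHS1_oneC_genC (d : F) (N : ℕ) (w : ℕ → V) (i j s : ℕ) :
    adlerRHS1 (⇑d) oneC (genC N w) i j s =
      -((-1) ^ (i + j) * ∑ n ∈ Ico s (N - i - j), ((n + i).choose i : V) * (n.choose (n - s) : V) *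
        (⇑d)^[n - s] (wExt N w (i + j + n + 1))) := by
  rw [adlerRHS1_oneC_natCast, finsum_eq_sum_of_support_subset _ (s := Ico s (N - i - j)), mul_sum,
    ← sum_neg_distrib]
  · refine sum_congr rfl fun t ht => ?_
    have ht := mem_Ico.mp ht
    rw [genC_natCast, if_pos (by omega), iterate_map_neg_one_pow_mul, add_right_comm _ 1 t,
      add_comm i t, Nat.choose_symm_add, Nat.choose_symm ht.1]
    ring_nf
    simp [pow_mul']
  · intro t ht
    rw [Function.mem_support] at ht
    rw [coe_Ico, Set.mem_Ico]
    by_contra h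
    rcases not_and_or.mp h with h | h
    · exact ht (by simp [Nat.choose_eq_zero_of_lt (not_le.mp h)])
    · exact ht (by rw [genC_natCast, if_neg (by omega), iterate_map_zero, mul_zero])

-- The coefficient of `λ^s` in `∑_n (binom(n+j, j)(-λ)^n - binom(n+i, i)(λ+∂)^n) W (i+j+n+1)`.
def principalBracketCoeff (d : V → V) (N : ℕ) (W : ℕ → V) (i j s : ℕ) : V :=
  (if i + j + s + 1 ≤ N then ((s + j).choose j : V) * (-1 : V) ^ s * W (i + j + s + 1) else 0) -
    ∑ n ∈ Ico s (N - i - j), ((n + i).choose i : V) * (n.choose (n - s) : V) *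
      d^[n - s] (W (i + j + n + 1))

theorem principalBracketCoeff_eq_zero_of_le (d : V → V) {N : ℕ} (W : ℕ → V) {i j n : ℕ}
    (h : N - i - j ≤ n) : principalBracketCoeff d N W i j n = 0 := by
  rw [principalBracketCoeff, if_neg (by omega), Ico_eq_empty (by omega), sum_empty, sub_zero]

theorem neg_one_pow_mul_iterate_principalBracketCoeff (d : F) (N : ℕ) (W : ℕ → V) {i j s n : ℕ}
    (hsn : s ≤ n) (hn : n < N - i - j) :
    (-1 : V) ^ n * (n.choose (n - s) : V) * (⇑d)^[n - s] (principalBracketCoeff (⇑d) N W i j n) =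
      ((n + j).choose j : V) * (n.choose (n - s) : V) * (⇑d)^[n - s] (W (i + j + n + 1)) -
        ∑ m ∈ Ico n (N - i - j), (((-1) ^ n * m.choose n * n.choose s : ℤ) : V) *
          (((m + i).choose i : V) * (⇑d)^[m - s] (W (i + j + m + 1))) := by
  rw [principalBracketCoeff, if_pos (by omega), iterate_map_sub, iterate_map_sum, mul_sub, mul_sum]
  simp only [mul_assoc, iterate_map_natCast_mul, iterate_map_neg_one_pow_mul,
    ← Function.iterate_add_apply]
  congr 1
  · ring_nf
    simp [pow_mul']
  · refine sum_congr rfl fun m hm => ?_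
    have hm := mem_Ico.mp hm
    rw [show n - s + (m - n) = m - s by omega, Nat.choose_symm hsn, Nat.choose_symm hm.1]
    push_cast
    ring

theorem principalBracketCoeff_swap (d : F) (N : ℕ) (W : ℕ → V) (i j s : ℕ) :
    principalBracketCoeff (⇑d) N W j i s =
      -∑ᶠ n : ℕ, if s ≤ n then
          (-1 : V) ^ n * (n.choose (n - s) : V) * (⇑d)^[n - s] (principalBracketCoeff (⇑d) N W i j n)
        else 0 := by
  set K := N - i - j with hK
  have hsupp : Function.support (fun n : ℕ => if s ≤ n then (-1 : V) ^ n * (n.choose (n - s) : V) *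
      (⇑d)^[n - s] (principalBracketCoeff (⇑d) N W i j n) else 0) ⊆ Ico s K := by
    intro n hn
    rw [coe_Ico, Set.mem_Ico]
    by_contra h
    refine hn ?_
    dsimp only
    split_ifs
    · rw [principalBracketCoeff_eq_zero_of_le _ _ (by omega), iterate_map_zero, mul_zero]
    · rfl
  have hcollapse : ∀ m ∈ Ico s K, ∑ n ∈ Icc s m, (((-1) ^ n * m.choose n * n.choose s : ℤ) : V) *
      (((m + i).choose i : V) * (⇑d)^[m - s] (W (i + j + m + 1))) =
        if m = s then (-1) ^ s * (((s + i).choose i : V) * W (i + j + s + 1)) else 0 := by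
    intro m _
    rw [← sum_mul, ← Int.cast_sum, sum_Icc_neg_one_pow_mul_choose_mul_choose]
    split_ifs with hms
    · subst hms
      push_cast
      rw [Nat.sub_self, Function.iterate_zero_apply]
    · rw [Int.cast_zero, zero_mul]
  rw [finsum_eq_sum_of_support_subset _ hsupp,
    sum_congr rfl fun n hn => by rw [if_pos (mem_Ico.mp hn).1,
      neg_one_pow_mul_iterate_principalBracketCoeff d N W (mem_Ico.mp hn).1 (mem_Ico.mp hn).2],
    sum_sub_distrib, sum_comm' (t' := Ico s K) (s' := fun m => Icc s m)
      fun n m => by simp only [mem_Ico, mem_Icc]; omega,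
    sum_congr rfl hcollapse, sum_ite_eq', principalBracketCoeff, add_comm j i, Nat.sub_right_comm,
    ← hK]
  by_cases hs : i + j + s + 1 ≤ N
  · rw [if_pos hs, if_pos (mem_Ico.mpr ⟨le_rfl, by omega⟩)]
    ring
  · rw [if_neg hs, if_neg fun h => hs (by have := mem_Ico.mp h; omega)]
    ring

end GenericOperator

theorem statement18_general {V : Type*} [CommRing V] (d : Derivation ℤ V V) {N : ℕ}
    (w : ℕ → V) (B : V → V → ℕ → V)
    (hadd1 : ∀ a b c s, B (a + b) c s = B a c s + B b c s)
    (hadd2 : ∀ a b c s, B a (b + c) s = B a b s + B a c s)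
    (hbiadler : ∀ (p q : ℤ) (s : ℕ),
        B (genC N w p) (genC N w q) s =
          (if p < 0 then ((intBin (q + s) s : ℤ) : V) * genC N w (p + q + s + 1) else 0)
        - (if 0 ≤ q then ((q.toNat + s).choose s : V) * genC N w (p + q + s + 1) else 0)
        + adlerRHS1 (⇑d) oneC (genC N w) p q s - adlerRHS2 (⇑d) oneC (genC N w) p q s) :
    (∀ i j : ℕ, i < N → j < N → ∀ s : ℕ,
        B (w i) (w j) s =
          (if i + j + s + 1 ≤ N then
              ((s + j).choose j : V) * (-1 : V) ^ s * wExt N w (i + j + s + 1)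
            else 0)
          - ∑ n ∈ Finset.Ico s (N - i - j),
              ((n + i).choose i : V) * (n.choose (n - s) : V) *
                (⇑d)^[n - s] (wExt N w (i + j + n + 1))) ∧
    (∀ i j : ℕ, i < N → j < N → ∀ s : ℕ,
        B (w j) (w i) s =
          -∑ᶠ n : ℕ, if s ≤ n then
              (-1 : V) ^ n * (n.choose (n - s) : V) * (⇑d)^[n - s] (B (w i) (w j) n)
            else 0) := by
  have hw : ∀ k < N, w k = (-1) ^ k * genC N w k := fun k hk => by
    rw [genC_natCast, if_pos hk.le, wExt, if_neg hk.ne, ← mul_assoc, ← pow_add,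
      Even.neg_one_pow ⟨k, rfl⟩, one_mul]
  have h1 : ∀ i j : ℕ, i < N → j < N → ∀ s : ℕ,
      B (w i) (w j) s = principalBracketCoeff (⇑d) N (wExt N w) i j s := by
    intro i j hi hj s
    rw [hw i hi, hw j hj, map_neg_one_pow_mul_of_map_add (f := (B · _ s)) (hadd1 · · _ s),
      map_neg_one_pow_mul_of_map_add (f := (B _ · s)) (hadd2 _ · · s), hbiadler, if_neg (by omega),
      if_pos (by omega), adlerRHS2_oneC_of_nonneg _ _ (by omega), adlerRHS1_oneC_genC,
      show (i : ℤ) + j + s + 1 = (i + j + s + 1 : ℕ) by push_cast; ring, genC_natCast,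
      Int.toNat_natCast, principalBracketCoeff, add_comm j s, Nat.choose_symm_add]
    split_ifs <;> ring_nf <;> simp [pow_mul']
  refine ⟨h1, fun i j hi hj s => ?_⟩
  simp only [h1 i j hi hj, h1 j i hj hi]
  exact principalBracketCoeff_swap d N (wExt N w) i j s

/-- **First `λ`-bracket for the principal nilpotent of `gl_N`** (Section 7.1,
formula for `{w_i _λ w_j}₁`).  If the `λ`-bracket `{·_λ·}₁` (with coefficients
`B a b s`) satisfies the bi-Adler identity \eqref{eq:bi-adler} for the generic monic
operator `L₁(∂) = −(−∂)^N + Σ_k w_k(−∂)^k` (stated coefficient-wise in `z^p w^q λ^s`),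
then on generators
`{w_i _λ w_j}₁ = Σ_{n=0}^{N−i−j−1}(binom(n+j,j)(−λ)ⁿ − binom(n+i,i)(λ+∂)ⁿ) w_{i+j+n+1}`
(with `w_N = −1`), and in particular this bracket is skewsymmetric:
`{w_j _λ w_i}₁ = −{w_i _{−λ−∂} w_j}₁`. -/
theorem statement18 {V : Type*} [CommRing V] (d : Derivation ℤ V V) {N : ℕ} (hN : 0 < N)
    (w : ℕ → V) (B : V → V → ℕ → V)
    (hadd1 : ∀ a b c s, B (a + b) c s = B a c s + B b c s)
    (hadd2 : ∀ a b c s, B a (b + c) s = B a b s + B a c s)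
    (hbiadler : ∀ (p q : ℤ) (s : ℕ),
        B (genC N w p) (genC N w q) s =
          (if p < 0 then ((intBin (q + s) s : ℤ) : V) * genC N w (p + q + s + 1) else 0)
        - (if 0 ≤ q then ((q.toNat + s).choose s : V) * genC N w (p + q + s + 1) else 0)
        + adlerRHS1 (⇑d) oneC (genC N w) p q s - adlerRHS2 (⇑d) oneC (genC N w) p q s) :
    (∀ i j : ℕ, i < N → j < N → ∀ s : ℕ,
        B (w i) (w j) s =
          (if i + j + s + 1 ≤ N then
              ((s + j).choose j : V) * (-1 : V) ^ s * wExt N w (i + j + s + 1)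
            else 0)
          - ∑ n ∈ Finset.Ico s (N - i - j),
              ((n + i).choose i : V) * (n.choose (n - s) : V) *
                (⇑d)^[n - s] (wExt N w (i + j + n + 1))) ∧
    (∀ i j : ℕ, i < N → j < N → ∀ s : ℕ,
        B (w j) (w i) s =
          -∑ᶠ n : ℕ, if s ≤ n then
              (-1 : V) ^ n * (n.choose (n - s) : V) * (⇑d)^[n - s] (B (w i) (w j) n)
            else 0) :=
  statement18_general d w B hadd1 hadd2 hbiadler
end
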